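/- Let m ≥ 4 be an integer and let G = (ℤ_2)^m. Let S = {(1,1,1,0,…,0), (0,1,1,0,…,0), (1,1,0,0,…,0)} ⊆ G (each vector has m coordinates, with the indicated entries in the first three coordinates and 0 elsewhere). Then for all a, b ∈ G with b − a = (1, 1, …, 1) (the all-ones vector), the complement of Cay(G, S), namely Cay(G, G \ (S ∪ {0})), does not exhibit PGFR between a and b. -/

import Mathlib

open Matrix Filter

/-- Adjacency matrix of the Cayley graph `Cay(G,S)`: `A x y = 1` iff `x - y ∈ S`. -/
noncomputable def cayAdj {G : Type*} [AddCommGroup G] [Fintype G] [DecidableEq G]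
    (S : Finset G) : Matrix G G ℂ :=
  Matrix.of fun x y => if x - y ∈ S then 1 else 0

/-- Transition matrix `H(t) = exp(-i t A)` of the Cayley graph `Cay(G,S)`. -/
noncomputable def cayH {G : Type*} [AddCommGroup G] [Fintype G] [DecidableEq G]
    (S : Finset G) (t : ℝ) : Matrix G G ℂ :=
  NormedSpace.exp ((-(Complex.I * (t : ℂ))) • cayAdj S)

/-- `Cay(G,S)` exhibits pretty good fractional revival (PGFR) between `a` and `b`. -/
def ExhibitsPGFR {G : Type*} [AddCommGroup G] [Fintype G] [DecidableEq G]
    (S : Finset G) (a b : G) : Prop :=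
  ∃ (α β : ℂ) (t : ℕ → ℝ), β ≠ 0 ∧ ‖α‖ ^ 2 + ‖β‖ ^ 2 = 1 ∧
    Tendsto (fun k => (cayH S (t k)).mulVec ((Pi.single a 1 : G → ℂ))) atTop
      (nhds (α • (Pi.single a 1 : G → ℂ) + β • (Pi.single b 1 : G → ℂ)))

/-- `Cay(G,S)` exhibits fractional revival (FR) between `a` and `b`. -/
def ExhibitsFR {G : Type*} [AddCommGroup G] [Fintype G] [DecidableEq G]
    (S : Finset G) (a b : G) : Prop :=
  ∃ (t : ℝ), 0 < t ∧ ∃ α β : ℂ, β ≠ 0 ∧ ‖α‖ ^ 2 + ‖β‖ ^ 2 = 1 ∧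
    (cayH S t).mulVec ((Pi.single a 1 : G → ℂ)) =
      α • (Pi.single a 1 : G → ℂ) + β • (Pi.single b 1 : G → ℂ)

/-- `Cay(G,S)` exhibits pretty good state transfer (PGST) between `a` and `b`. -/
def ExhibitsPGST {G : Type*} [AddCommGroup G] [Fintype G] [DecidableEq G]
    (S : Finset G) (a b : G) : Prop :=
  ∃ (β : ℂ) (t : ℕ → ℝ), ‖β‖ = 1 ∧
    Tendsto (fun k => (cayH S (t k)).mulVec ((Pi.single a 1 : G → ℂ))) atTop
      (nhds (β • (Pi.single b 1 : G → ℂ)))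

/-- The eigenvalue `λ_r = Σ_{y ∈ S} exp(2πi r y / n)` of the circulant graph `Cay(ℤ_n, S)`. -/
noncomputable def circEig (n : ℕ) [NeZero n] (S : Finset (ZMod n)) (r : ℕ) : ℂ :=
  ∑ y ∈ S, Complex.exp (2 * Real.pi * Complex.I * r * y.val / n)


/-! Every character `ψ` of a finite abelian group is a common left eigenvector of all Cayley
adjacency matrices, with eigenvalue `∑ s ∈ S, ψ s`. Pairing `H(t) e_a` with `ψ` shows that PGFR
from `a` to `b` forces `ψ₁ (b - a) = ψ₂ (b - a)` whenever `ψ₁` and `ψ₂` have the same eigenvalue.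
In a complement `Cay(G, G \ U)`, two nontrivial characters that agree on `U` have the same
eigenvalue. Here `ψ₁ x = (-1) ^ x₀` and `ψ₂ x = (-1) ^ (x₀ + x₃)` agree on `S ∪ {0}`, since every
element of it has `x₃ = 0`, but `ψ₁ (1, …, 1) = -1 ≠ 1 = ψ₂ (1, …, 1)`. -/

open Finset

theorem Matrix.vecMul_exp_of_vecMul_eq_smul {n : Type*} [Fintype n] [DecidableEq n]
    {M : Matrix n n ℂ} {v : n → ℂ} {μ : ℂ}
    (h : v ᵥ* M = μ • v) : v ᵥ* NormedSpace.exp M = NormedSpace.exp μ • v := by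
  -- `exp` does not depend on the norm; any normed algebra structure gives the convergent series.
  let _ : NormedRing (Matrix n n ℂ) := Matrix.linftyOpNormedRing
  let _ : NormedAlgebra ℂ (Matrix n n ℂ) := Matrix.linftyOpNormedAlgebra
  have hpow : ∀ k : ℕ, v ᵥ* M ^ k = μ ^ k • v := by
    intro k
    induction k with
    | zero => simp
    | succ k ih => rw [pow_succ, ← vecMul_vecMul, ih, smul_vecMul, h, smul_smul, pow_succ]
  have hseries := (NormedSpace.exp_series_hasSum_exp' (𝕂 := ℂ) M).mapL
    (Matrix.vecMulBilin ℂ ℂ v).toContinuousLinearMap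
  simp only [LinearMap.coe_toContinuousLinearMap', Matrix.vecMulBilin_apply] at hseries
  refine hseries.unique ?_
  simpa [vecMul_smul, hpow, smul_smul] using
    (NormedSpace.exp_series_hasSum_exp' (𝕂 := ℂ) μ).smul_const v

namespace AddChar

variable {G : Type*} [AddCommGroup G] [Fintype G] [DecidableEq G]

theorem vecMul_cayAdj (ψ : AddChar G ℂ) (S : Finset G) :
    ⇑ψ ᵥ* cayAdj S = (∑ s ∈ S, ψ s) • ⇑ψ := by
  ext y
  have hshift : ∑ x, (if x - y ∈ S then ψ x else 0) = ∑ s, (if s ∈ S then ψ s * ψ y else 0) :=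
    Fintype.sum_equiv (Equiv.subRight y) _ _ fun x => by simp [← map_add_eq_mul]
  simp only [vecMul, dotProduct, cayAdj, of_apply, mul_ite, mul_one, mul_zero, Pi.smul_apply,
    smul_eq_mul, hshift, sum_ite_mem, univ_inter, sum_mul]

theorem vecMul_cayH (ψ : AddChar G ℂ) (S : Finset G) (t : ℝ) :
    ⇑ψ ᵥ* cayH S t = NormedSpace.exp (-(Complex.I * t) * ∑ s ∈ S, ψ s) • ⇑ψ := by
  refine Matrix.vecMul_exp_of_vecMul_eq_smul ?_
  rw [vecMul_smul, vecMul_cayAdj, smul_smul]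

theorem tendsto_exp_of_tendsto_cayH {ψ : AddChar G ℂ} {S : Finset G} {a b : G} {α β : ℂ}
    {t : ℕ → ℝ}
    (h : Tendsto (fun k => cayH S (t k) *ᵥ Pi.single a 1) atTop
      (nhds (α • Pi.single a 1 + β • Pi.single b 1))) :
    Tendsto (fun k => NormedSpace.exp (-(Complex.I * t k) * ∑ s ∈ S, ψ s)) atTop
      (nhds (α + β * ψ (b - a))) := by
  have hpair : Continuous fun u : G → ℂ => ψ (-a) * (⇑ψ ⬝ᵥ u) := by fun_prop
  have hlim := (hpair.tendsto _).comp h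
  have hval : ∀ k, ψ (-a) * (⇑ψ ⬝ᵥ (cayH S (t k) *ᵥ Pi.single a 1))
      = NormedSpace.exp (-(Complex.I * t k) * ∑ s ∈ S, ψ s) := by
    intro k
    rw [dotProduct_mulVec, vecMul_cayH, smul_dotProduct, dotProduct_single, mul_one,
      smul_eq_mul, mul_left_comm, ← map_add_eq_mul, neg_add_cancel, map_zero_eq_one, mul_one]
  have htarget : ψ (-a) * (⇑ψ ⬝ᵥ (α • Pi.single a 1 + β • Pi.single b 1)) = α + β * ψ (b - a) := by
    simp only [dotProduct_add, dotProduct_smul, dotProduct_single, mul_one, smul_eq_mul]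
    rw [mul_add, mul_left_comm, mul_left_comm _ β, ← map_add_eq_mul, ← map_add_eq_mul,
      neg_add_cancel, map_zero_eq_one, mul_one, neg_add_eq_sub]
  simpa only [Function.comp_def, hval, htarget] using hlim

theorem sum_compl_eq_of_eqOn {ψ₁ ψ₂ : AddChar G ℂ} (h₁ : ψ₁ ≠ 0) (h₂ : ψ₂ ≠ 0)
    {U : Finset G} (hU : Set.EqOn ψ₁ ψ₂ U) : ∑ s ∈ univ \ U, ψ₁ s = ∑ s ∈ univ \ U, ψ₂ s := by
  rw [sum_sdiff_eq_sub (subset_univ U), sum_sdiff_eq_sub (subset_univ U),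
    sum_eq_zero_iff_ne_zero.2 h₁, sum_eq_zero_iff_ne_zero.2 h₂, sum_congr rfl fun s hs => hU hs]

end AddChar

theorem ExhibitsPGFR.apply_sub_eq_of_sum_eq {G : Type*} [AddCommGroup G] [Fintype G]
    [DecidableEq G] {S : Finset G} {a b : G} (h : ExhibitsPGFR S a b)
    {ψ₁ ψ₂ : AddChar G ℂ} (hψ : ∑ s ∈ S, ψ₁ s = ∑ s ∈ S, ψ₂ s) : ψ₁ (b - a) = ψ₂ (b - a) := by
  obtain ⟨α, β, t, hβ, -, hlim⟩ := h
  have hlim₁ := AddChar.tendsto_exp_of_tendsto_cayH (ψ := ψ₁) hlim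
  rw [hψ] at hlim₁
  have := tendsto_nhds_unique hlim₁ (AddChar.tendsto_exp_of_tendsto_cayH hlim)
  exact mul_left_cancel₀ hβ (add_left_cancel this)

def signChar : AddChar (ZMod 2) ℂ where
  toFun x := (-1) ^ x.val
  map_zero_eq_one' := by rw [ZMod.val_zero, pow_zero]
  map_add_eq_mul' x y := by rw [← pow_add, ZMod.val_add, ← neg_one_pow_eq_pow_mod_two]

@[simp] theorem signChar_zero : signChar 0 = 1 := signChar.map_zero_eq_one

@[simp] theorem signChar_one : signChar 1 = -1 := pow_one _

section SignCoordChar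

variable {ι : Type*}

def signCoordChar (i : ι) : AddChar (ι → ZMod 2) ℂ :=
  signChar.compAddMonoidHom (Pi.evalAddMonoidHom (fun _ => ZMod 2) i)

@[simp] theorem signCoordChar_apply (i : ι) (x : ι → ZMod 2) :
    signCoordChar i x = signChar (x i) := rfl

theorem signCoordChar_ne_zero [DecidableEq ι] (i : ι) : signCoordChar i ≠ 0 :=
  AddChar.ne_zero_iff.2 ⟨Pi.single i 1, by norm_num⟩

theorem signCoordChar_mul_ne_zero [DecidableEq ι] {i j : ι} (hij : i ≠ j) :
    signCoordChar i * signCoordChar j ≠ 0 :=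
  AddChar.ne_zero_iff.2 ⟨Pi.single i 1, by norm_num [hij.symm]⟩

theorem eqOn_signCoordChar_mul (i j : ι) :
    Set.EqOn (signCoordChar i) (signCoordChar i * signCoordChar j) {x | x j = 0} :=
  fun x (hx : x j = 0) => by simp [hx]

end SignCoordChar

theorem stmt_19 (m : ℕ) (hm : 4 ≤ m) :
    ∀ a b : Fin m → ZMod 2, (b - a = fun _ => 1) →
      ¬ ExhibitsPGFR
          (Finset.univ \
            (({(fun j : Fin m => if j.val < 3 then 1 else 0),
               (fun j : Fin m => if j.val = 1 ∨ j.val = 2 then 1 else 0),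
               (fun j : Fin m => if j.val < 2 then 1 else 0)} :
              Finset (Fin m → ZMod 2)) ∪ {0}))
          a b := by
  intro a b hab hPGFR
  let i : Fin m := ⟨0, by omega⟩
  let j : Fin m := ⟨3, by omega⟩
  have hij : i ≠ j := by simp [i, j, Fin.ext_iff]
  refine absurd (hPGFR.apply_sub_eq_of_sum_eq (AddChar.sum_compl_eq_of_eqOn
    (signCoordChar_ne_zero i) (signCoordChar_mul_ne_zero hij)
    ((eqOn_signCoordChar_mul i j).mono fun x hx => ?_))) ?_
  · simp only [coe_union, coe_insert, coe_singleton, Set.mem_union, Set.mem_insert_iff,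
      Set.mem_singleton_iff] at hx
    rcases hx with (rfl | rfl | rfl) | rfl <;> simp [j]
  · norm_num [hab]
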